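/- Cyclewidth is monotone under butterfly minors: if D is a digraph and D' is a butterfly minor of D, then cw(D') ≤ cw(D). -/

import Mathlib

open scoped Classical

/-- A finite digraph (without loops or multiple arcs) on a subset of `ℕ`. -/
structure Dgraph where
  verts : Finset ℕ
  arcs : Finset (ℕ × ℕ)
  arcs_mem : ∀ a ∈ arcs, a.1 ∈ verts ∧ a.2 ∈ verts
  no_loops : ∀ a ∈ arcs, a.1 ≠ a.2

/-- The cut of a digraph at a set `X`: all arcs with exactly one endpoint in `X`. -/
noncomputable def Dgraph.cutArcs (D : Dgraph) (X : Set ℕ) : Finset (ℕ × ℕ) :=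
  D.arcs.filter fun a => (a.1 ∈ X ∧ a.2 ∉ X) ∨ (a.1 ∉ X ∧ a.2 ∈ X)

/-- `F` is the union of the arc sets of a family of pairwise vertex-disjoint directed
cycles of `D`: every vertex has at most one outgoing arc in `F` and equally many
outgoing and incoming arcs in `F`. -/
def Dgraph.IsCycleFamily (D : Dgraph) (F : Finset (ℕ × ℕ)) : Prop :=
  F ⊆ D.arcs ∧ ∀ v : ℕ,
    (F.filter fun a => a.1 = v).card ≤ 1 ∧
    (F.filter fun a => a.1 = v).card = (F.filter fun a => a.2 = v).card

/-- The cycle porosity of the cut at `X`: the maximum number of edges of the cut lying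
on a family of pairwise vertex-disjoint directed cycles. -/
noncomputable def Dgraph.cycPorosity (D : Dgraph) (X : Set ℕ) : ℕ :=
  (D.arcs.powerset.filter fun F => D.IsCycleFamily F).sup fun F => (D.cutArcs X ∩ F).card

/-- A leaf of a tree (a vertex with at most one neighbour). -/
def IsTreeLeaf {W : Type} (T : SimpleGraph W) (t : W) : Prop :=
  (T.neighborSet t).ncard ≤ 1

/-- A cubic tree: a tree all of whose inner (non-leaf) vertices have degree exactly 3. -/
def IsCubicTree {W : Type} (T : SimpleGraph W) : Prop :=
  T.IsTree ∧ ∀ t : W, ¬ IsTreeLeaf T t → (T.neighborSet t).ncard = 3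

/-- The shore induced by the tree edge `t₁t₂`: the images of all leaves lying on the
`t₁`-side of the tree after deleting the edge `t₁t₂`. -/
def treeShore {W : Type} (T : SimpleGraph W) (φ : W → ℕ) (t₁ t₂ : W) : Set ℕ :=
  φ '' {l | IsTreeLeaf T l ∧ (T.deleteEdges {s(t₁, t₂)}).Reachable t₁ l}

/-- A cycle decomposition of a digraph `D`: a cubic tree together with a bijection `φ`
between its leaves and the vertices of `D`. -/
structure CycleDecomp (D : Dgraph) where
  W : Type
  fin : Fintype W
  T : SimpleGraph W
  cubic : IsCubicTree T
  φ : W → ℕ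
  bij : Set.BijOn φ {l | IsTreeLeaf T l} ↑D.verts

/-- The width of a cycle decomposition: the maximum cycle porosity over the cuts induced
by the edges of the tree. -/
noncomputable def CycleDecomp.width {D : Dgraph} (c : CycleDecomp D) : ℕ :=
  letI := c.fin
  Finset.univ.sup fun p : c.W × c.W =>
    if c.T.Adj p.1 p.2 then D.cycPorosity (treeShore c.T c.φ p.1 p.2) else 0

/-- The cyclewidth of a digraph: the least width of a cycle decomposition. -/
noncomputable def cycleWidth (D : Dgraph) : ℕ :=
  sInf {k | ∃ c : CycleDecomp D, c.width = k}

/-- `H` is a subgraph of `D`. -/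
def Dgraph.IsSubgraph (H D : Dgraph) : Prop :=
  H.verts ⊆ D.verts ∧ H.arcs ⊆ D.arcs

/-- The digraph obtained by reversing the orientation of every arc. -/
noncomputable def Dgraph.reverse (D : Dgraph) : Dgraph where
  verts := D.verts
  arcs := D.arcs.image Prod.swap
  arcs_mem := by
    intro a ha
    simp only [Finset.mem_image] at ha
    obtain ⟨b, hb, rfl⟩ := ha
    exact ⟨(D.arcs_mem b hb).2, (D.arcs_mem b hb).1⟩
  no_loops := by
    intro a ha
    simp only [Finset.mem_image] at ha
    obtain ⟨b, hb, rfl⟩ := ha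
    exact fun h => D.no_loops b hb h.symm

/-- The result of butterfly contracting the arc `(u, v)`, the contraction vertex being
named `x`; arcs formerly incident with `u` or `v` are inherited by `x`, without
creating loops. -/
noncomputable def butterflyContract (D : Dgraph) (u v x : ℕ) : Dgraph where
  verts := (D.verts.erase u).erase v ∪ {x}
  arcs := ((D.arcs.erase (u, v)).image fun p =>
      (if p.1 = u ∨ p.1 = v then x else p.1, if p.2 = u ∨ p.2 = v then x else p.2)).filter
      fun p => p.1 ≠ p.2
  arcs_mem := by
    intro a ha
    simp only [Finset.mem_filter, Finset.mem_image] at ha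
    obtain ⟨⟨p, hp, rfl⟩, -⟩ := ha
    have h1 := D.arcs_mem p (Finset.mem_of_mem_erase hp)
    constructor
    · by_cases h : p.1 = u ∨ p.1 = v
      · simp [h]
      · push_neg at h
        simp only [h.1, h.2, or_self, if_false, Finset.mem_union, Finset.mem_erase]
        exact Or.inl ⟨h.2, h.1, h1.1⟩
    · by_cases h : p.2 = u ∨ p.2 = v
      · simp [h]
      · push_neg at h
        simp only [h.1, h.2, or_self, if_false, Finset.mem_union, Finset.mem_erase]
        exact Or.inl ⟨h.2, h.1, h1.2⟩
  no_loops := fun a ha => (Finset.mem_filter.mp ha).2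

/-- The arc `(u, v)` is butterfly-contractible: it is the only arc leaving `u` or the
only arc entering `v`. -/
def Dgraph.ButterflyContractible (D : Dgraph) (u v : ℕ) : Prop :=
  (u, v) ∈ D.arcs ∧
  ((∀ w, (u, w) ∈ D.arcs → w = v) ∨ (∀ w, (w, v) ∈ D.arcs → w = u))

/-- One butterfly contraction step. -/
def ButterflyStep (D D' : Dgraph) : Prop :=
  ∃ u v x, D.ButterflyContractible u v ∧ x ∉ (D.verts.erase u).erase v ∧
    D' = butterflyContract D u v x

/-- `H` is a butterfly minor of `D`: it can be obtained from a subgraph of `D` by a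
sequence of butterfly contractions. -/
def IsButterflyMinor (H D : Dgraph) : Prop :=
  ∃ S : Dgraph, S.IsSubgraph D ∧ Relation.ReflTransGen ButterflyStep S H


/-!
A cycle decomposition of `D` restricts to any nonempty set `V` of vertices of `D`: deleting the
leaf of one vertex and suppressing its (cubic) neighbour leaves a cubic tree whose edge-cuts are
the old ones with that vertex removed. For a subgraph `S` of `D` we restrict to `S.verts`; every
cut then has at most the porosity of the corresponding cut of `D`, since `S` has fewer arcs.

For a butterfly contraction of an arc `(u, v)` which is the only arc leaving `u`, we delete the
leaf of `u` and give the leaf of `v` to the new vertex `x`. A family of disjoint cycles of the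
contraction passing through `x` along `A → x → B` lifts to a family of `D` through `A → v → B` or
`A → u → v → B`, and the lifted path crosses the cut at least as often. If instead `(u, v)` is the
only arc entering `v`, reverse all arcs.
-/

lemma Finset.mem_image_swap {α β : Type*} [DecidableEq α] [DecidableEq β]
    {s : Finset (α × β)} {p : β × α} : p ∈ s.image Prod.swap ↔ p.swap ∈ s := by
  refine ⟨fun h => ?_, fun h => Finset.mem_image.mpr ⟨p.swap, h, p.swap_swap⟩⟩
  obtain ⟨q, hq, rfl⟩ := Finset.mem_image.mp h
  rwa [Prod.swap_swap]

lemma Finset.card_inter_eq_sum_ite {α : Type*} [DecidableEq α] (s t : Finset α) :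
    (s ∩ t).card = ∑ a ∈ t, if a ∈ s then 1 else 0 := by
  rw [Finset.inter_comm, ← Finset.filter_mem_eq_inter, Finset.card_filter]

namespace Dgraph

def outDeg (F : Finset (ℕ × ℕ)) (w : ℕ) : ℕ := (F.filter fun a => a.1 = w).card

def inDeg (F : Finset (ℕ × ℕ)) (w : ℕ) : ℕ := (F.filter fun a => a.2 = w).card

section Porosity

variable {D H : Dgraph} {X Y : Set ℕ} {F : Finset (ℕ × ℕ)}

lemma outDeg_eq_sum (F : Finset (ℕ × ℕ)) (w : ℕ) :
    outDeg F w = ∑ a ∈ F, if a.1 = w then 1 else 0 :=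
  Finset.card_filter _ _

lemma inDeg_eq_sum (F : Finset (ℕ × ℕ)) (w : ℕ) :
    inDeg F w = ∑ a ∈ F, if a.2 = w then 1 else 0 :=
  Finset.card_filter _ _

lemma outDeg_union {A B : Finset (ℕ × ℕ)} (h : Disjoint A B) (w : ℕ) :
    outDeg (A ∪ B) w = outDeg A w + outDeg B w := by
  rw [outDeg, Finset.filter_union, Finset.card_union_of_disjoint (Finset.disjoint_filter_filter h)]
  rfl

lemma inDeg_union {A B : Finset (ℕ × ℕ)} (h : Disjoint A B) (w : ℕ) :
    inDeg (A ∪ B) w = inDeg A w + inDeg B w := by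
  rw [inDeg, Finset.filter_union, Finset.card_union_of_disjoint (Finset.disjoint_filter_filter h)]
  rfl

lemma outDeg_image_swap (w : ℕ) : outDeg (F.image Prod.swap) w = inDeg F w := by
  rw [outDeg, Finset.filter_image, Finset.card_image_of_injective _ Prod.swap_injective]
  rfl

lemma inDeg_image_swap (w : ℕ) : inDeg (F.image Prod.swap) w = outDeg F w := by
  rw [inDeg, Finset.filter_image, Finset.card_image_of_injective _ Prod.swap_injective]
  rfl

lemma isCycleFamily_iff :
    D.IsCycleFamily F ↔ F ⊆ D.arcs ∧ ∀ w, outDeg F w ≤ 1 ∧ outDeg F w = inDeg F w :=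
  Iff.rfl

lemma mem_cutArcs {a : ℕ × ℕ} :
    a ∈ D.cutArcs X ↔ a ∈ D.arcs ∧ ((a.1 ∈ X ∧ a.2 ∉ X) ∨ (a.1 ∉ X ∧ a.2 ∈ X)) :=
  Finset.mem_filter

lemma card_cutArcs_inter_le_cycPorosity (hF : D.IsCycleFamily F) :
    (D.cutArcs X ∩ F).card ≤ D.cycPorosity X :=
  Finset.le_sup (f := fun F => (D.cutArcs X ∩ F).card)
    (Finset.mem_filter.mpr ⟨Finset.mem_powerset.mpr hF.1, hF⟩)

lemma cycPorosity_le_iff {m : ℕ} :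
    D.cycPorosity X ≤ m ↔ ∀ F, D.IsCycleFamily F → (D.cutArcs X ∩ F).card ≤ m := by
  simp only [cycPorosity, Finset.sup_le_iff, Finset.mem_filter, Finset.mem_powerset]
  exact ⟨fun h F hF => h F ⟨hF.1, hF⟩, fun h F hF => h F hF.2⟩

lemma cycPorosity_le_of_arcs_subset (h : H.arcs ⊆ D.arcs) :
    H.cycPorosity X ≤ D.cycPorosity X := by
  refine cycPorosity_le_iff.mpr fun F hF => le_trans (Finset.card_le_card ?_)
    (card_cutArcs_inter_le_cycPorosity (D := D) ⟨hF.1.trans h, hF.2⟩)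
  exact Finset.inter_subset_inter (Finset.filter_subset_filter _ h) subset_rfl

lemma cycPorosity_congr (h : ∀ a ∈ D.arcs, (a.1 ∈ X ↔ a.1 ∈ Y) ∧ (a.2 ∈ X ↔ a.2 ∈ Y)) :
    D.cycPorosity X = D.cycPorosity Y := by
  have hcut : D.cutArcs X = D.cutArcs Y :=
    Finset.filter_congr fun a ha => by rw [(h a ha).1, (h a ha).2]
  rw [cycPorosity, cycPorosity, hcut]

lemma cycPorosity_inter_verts : D.cycPorosity (X ∩ D.verts) = D.cycPorosity X :=
  cycPorosity_congr fun a ha => by simp [(D.arcs_mem a ha).1, (D.arcs_mem a ha).2]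

lemma cycPorosity_eq_zero_of_verts_eq_empty (h : D.verts = ∅) : D.cycPorosity X = 0 := by
  have harcs : D.arcs = ∅ := Finset.eq_empty_of_forall_notMem fun a ha => by
    simpa [h] using (D.arcs_mem a ha).1
  simp [cycPorosity, cutArcs, harcs]

lemma cycPorosity_le_of_arcs_eq_image_swap (hH : H.arcs = D.arcs.image Prod.swap) :
    D.cycPorosity X ≤ H.cycPorosity X := by
  refine cycPorosity_le_iff.mpr fun F hF => ?_
  have hF' : H.IsCycleFamily (F.image Prod.swap) := by
    rw [isCycleFamily_iff] at hF ⊢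
    refine ⟨hH ▸ Finset.image_subset_image hF.1, fun w => ?_⟩
    rw [outDeg_image_swap, inDeg_image_swap]
    exact ⟨(hF.2 w).2 ▸ (hF.2 w).1, (hF.2 w).2.symm⟩
  have hcut : H.cutArcs X ∩ F.image Prod.swap = (D.cutArcs X ∩ F).image Prod.swap := by
    ext a
    simp only [Finset.mem_inter, Finset.mem_image, mem_cutArcs, hH]
    constructor
    · rintro ⟨⟨⟨b, hb, rfl⟩, hc⟩, c, hc', hcb⟩
      exact ⟨b, ⟨⟨hb, by simp at hc; tauto⟩, Prod.swap_injective hcb ▸ hc'⟩, rfl⟩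
    · rintro ⟨b, ⟨⟨hb, hc⟩, hbF⟩, rfl⟩
      exact ⟨⟨⟨b, hb, rfl⟩, by simp; tauto⟩, b, hbF, rfl⟩
  calc (D.cutArcs X ∩ F).card = (H.cutArcs X ∩ F.image Prod.swap).card := by
        rw [hcut, Finset.card_image_of_injective _ Prod.swap_injective]
    _ ≤ H.cycPorosity X := card_cutArcs_inter_le_cycPorosity hF'

lemma cycPorosity_eq_of_arcs_eq_image_swap (hH : H.arcs = D.arcs.image Prod.swap) :
    H.cycPorosity X = D.cycPorosity X := by
  refine le_antisymm (cycPorosity_le_of_arcs_eq_image_swap ?_)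
    (cycPorosity_le_of_arcs_eq_image_swap hH)
  rw [hH, Finset.image_image, Prod.swap_swap_eq, Finset.image_id]

lemma cycPorosity_reverse : D.reverse.cycPorosity X = D.cycPorosity X :=
  cycPorosity_eq_of_arcs_eq_image_swap rfl

/-- The part `F₀` of a cycle family of `D'` away from `S` is kept, and the rest `Q` is traded for
arcs `P` of `D` with the same degrees outside `S`: then `F₀ ∪ P` is a cycle family of `D`. -/
lemma card_cutArcs_inter_le_cycPorosity_of_replace {D' : Dgraph} {X' S : Set ℕ}
    {F₀ P Q : Finset (ℕ × ℕ)} (hfam : D'.IsCycleFamily (F₀ ∪ Q))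
    (hF₀ : ∀ a ∈ F₀, a ∈ D.arcs ∧ a.1 ∉ S ∧ a.2 ∉ S) (hP : P ⊆ D.arcs)
    (hPS : ∀ a ∈ P, a.1 ∈ S ∨ a.2 ∈ S) (hQS : ∀ a ∈ Q, a.1 ∈ S ∨ a.2 ∈ S)
    (hout : ∀ w ∉ S, outDeg P w = outDeg Q w) (hin : ∀ w ∉ S, inDeg P w = inDeg Q w)
    (hbal : ∀ w ∈ S, outDeg P w ≤ 1 ∧ outDeg P w = inDeg P w)
    (hX : ∀ w ∉ S, (w ∈ X' ↔ w ∈ X))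
    (hcut : (D'.cutArcs X' ∩ Q).card ≤ (D.cutArcs X ∩ P).card) :
    (D'.cutArcs X' ∩ (F₀ ∪ Q)).card ≤ D.cycPorosity X := by
  have disj {R : Finset (ℕ × ℕ)} (hR : ∀ a ∈ R, a.1 ∈ S ∨ a.2 ∈ S) : Disjoint F₀ R :=
    Finset.disjoint_left.mpr fun a ha haR => by
      rcases hR a haR with h | h
      exacts [(hF₀ a ha).2.1 h, (hF₀ a ha).2.2 h]
  have hF₀S (w : ℕ) (hw : w ∈ S) : outDeg F₀ w = 0 ∧ inDeg F₀ w = 0 := by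
    simp only [outDeg, inDeg, Finset.card_eq_zero, Finset.filter_eq_empty_iff]
    exact ⟨fun a ha h => (hF₀ a ha).2.1 (h ▸ hw), fun a ha h => (hF₀ a ha).2.2 (h ▸ hw)⟩
  have hfamP : D.IsCycleFamily (F₀ ∪ P) := by
    rw [isCycleFamily_iff] at hfam ⊢
    refine ⟨Finset.union_subset (fun a ha => (hF₀ a ha).1) hP, fun w => ?_⟩
    rw [outDeg_union (disj hPS), inDeg_union (disj hPS)]
    by_cases hw : w ∈ S
    · rw [(hF₀S w hw).1, (hF₀S w hw).2, zero_add, zero_add]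
      exact hbal w hw
    · rw [hout w hw, hin w hw, ← outDeg_union (disj hQS), ← inDeg_union (disj hQS)]
      exact hfam.2 w
  have hcutF₀ : D'.cutArcs X' ∩ F₀ = D.cutArcs X ∩ F₀ := by
    ext a
    simp only [Finset.mem_inter, mem_cutArcs]
    constructor <;> rintro ⟨⟨-, hc⟩, ha⟩ <;> refine ⟨⟨?_, ?_⟩, ha⟩
    · exact (hF₀ a ha).1
    · rwa [← hX _ (hF₀ a ha).2.1, ← hX _ (hF₀ a ha).2.2]
    · exact hfam.1 (Finset.mem_union_left _ ha)
    · rwa [hX _ (hF₀ a ha).2.1, hX _ (hF₀ a ha).2.2]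
  have hsplit {E : Dgraph} {Z : Set ℕ} {R : Finset (ℕ × ℕ)} (hR : Disjoint F₀ R) :
      (E.cutArcs Z ∩ (F₀ ∪ R)).card = (E.cutArcs Z ∩ F₀).card + (E.cutArcs Z ∩ R).card := by
    rw [Finset.inter_union_distrib_left]
    exact Finset.card_union_of_disjoint
      (hR.mono Finset.inter_subset_right Finset.inter_subset_right)
  calc (D'.cutArcs X' ∩ (F₀ ∪ Q)).card
      ≤ (D.cutArcs X ∩ (F₀ ∪ P)).card := by
        rw [hsplit (disj hQS), hsplit (disj hPS), hcutF₀]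
        omega
    _ ≤ D.cycPorosity X := card_cutArcs_inter_le_cycPorosity hfamP

lemma IsCycleFamily.filter_incident_eq (hF : D.IsCycleFamily F) (x : ℕ) :
    F.filter (fun a => a.1 = x ∨ a.2 = x) = ∅ ∨ ∃ A B, (A, x) ∈ F ∧ (x, B) ∈ F ∧
      F.filter (fun a => a.1 = x ∨ a.2 = x) = {(A, x), (x, B)} := by
  rw [Finset.filter_or]
  obtain ⟨hle, heq⟩ := (isCycleFamily_iff.mp hF).2 x
  rcases Nat.le_one_iff_eq_zero_or_eq_one.mp hle with h0 | h1
  · have h0' : inDeg F x = 0 := heq ▸ h0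
    rw [outDeg, Finset.card_eq_zero] at h0
    rw [inDeg, Finset.card_eq_zero] at h0'
    exact Or.inl (by rw [h0, h0', Finset.union_empty])
  · obtain ⟨⟨x₁, B⟩, hq⟩ := Finset.card_eq_one.mp h1
    obtain ⟨⟨A, x₂⟩, hr⟩ := Finset.card_eq_one.mp (heq ▸ h1 : inDeg F x = 1)
    obtain ⟨hB, rfl : x₁ = x⟩ :=
      Finset.mem_filter.mp (hq ▸ Finset.mem_singleton_self _ : (x₁, B) ∈ F.filter _)
    obtain ⟨hA, rfl : x₂ = x₁⟩ :=
      Finset.mem_filter.mp (hr ▸ Finset.mem_singleton_self _ : (A, x₂) ∈ F.filter _)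
    refine Or.inr ⟨A, B, hA, hB, ?_⟩
    rw [hq, hr, Finset.union_comm]
    rfl

end Porosity

/-- The vertex map of the butterfly contraction of `(u, v)` into `x`. -/
def contractMap (u v x w : ℕ) : ℕ := if w = u ∨ w = v then x else w

section Contraction

variable {D : Dgraph} {X X' : Set ℕ} {V : Finset ℕ} {u v x w : ℕ}

lemma contractMap_of_ne (hu : w ≠ u) (hv : w ≠ v) : contractMap u v x w = w :=
  if_neg (not_or.mpr ⟨hu, hv⟩)

lemma contractMap_comm : contractMap v u x = contractMap u v x := by
  ext w
  simp only [contractMap, or_comm]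

lemma ne_of_contractMap_ne (h : contractMap u v x w ≠ x) : w ≠ u ∧ w ≠ v := by
  by_contra! h'
  exact h (if_pos (by tauto))

lemma contractMap_eq_iff (hx : x ∉ (V.erase u).erase v) (hw : w ∈ V) :
    contractMap u v x w = x ↔ w = u ∨ w = v := by
  unfold contractMap
  split_ifs with h
  · simp [h]
  · refine ⟨fun hwx => absurd (hwx ▸ hw) ?_, fun h' => absurd h' h⟩
    simp_all

lemma contractMap_of_mem_erase (hw : w ∈ V.erase u) :
    contractMap u v x w = if w = v then x else w := by
  simp [contractMap, (Finset.mem_erase.mp hw).1]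

lemma contractMap_eq_iff_of_mem_erase (hx : x ∉ (V.erase u).erase v) (hw : w ∈ V.erase u) :
    contractMap u v x w = x ↔ w = v :=
  (contractMap_eq_iff hx (Finset.mem_of_mem_erase hw)).trans
    (or_iff_right (Finset.ne_of_mem_erase hw))

lemma bijOn_contractMap (hv : v ∈ V) (huv : u ≠ v) (hx : x ∉ (V.erase u).erase v) :
    Set.BijOn (contractMap u v x) ↑(V.erase u) ↑((V.erase u).erase v ∪ {x}) := by
  refine ⟨fun w hw => ?_, fun w₁ hw₁ w₂ hw₂ e => ?_, fun y hy => ?_⟩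
  · rw [Finset.mem_coe, contractMap_of_mem_erase hw]
    split_ifs with h
    · exact Finset.mem_union_right _ (Finset.mem_singleton_self x)
    · exact Finset.mem_union_left _ (Finset.mem_erase.mpr ⟨h, hw⟩)
  · by_cases h₁ : w₁ = v
    · rw [h₁, (contractMap_eq_iff_of_mem_erase hx hw₂).mp
        (e ▸ (contractMap_eq_iff_of_mem_erase hx hw₁).mpr h₁)]
    by_cases h₂ : w₂ = v
    · exact absurd ((contractMap_eq_iff_of_mem_erase hx hw₁).mp
        (e.trans ((contractMap_eq_iff_of_mem_erase hx hw₂).mpr h₂))) h₁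
    rwa [contractMap_of_mem_erase hw₁, contractMap_of_mem_erase hw₂, if_neg h₁, if_neg h₂] at e
  · rcases Finset.mem_union.mp hy with hy | hy
    · refine ⟨y, Finset.mem_of_mem_erase hy, ?_⟩
      rw [contractMap_of_mem_erase (Finset.mem_of_mem_erase hy), if_neg (Finset.ne_of_mem_erase hy)]
    · have hv' : v ∈ V.erase u := Finset.mem_erase.mpr ⟨Ne.symm huv, hv⟩
      exact ⟨v, hv', ((contractMap_eq_iff_of_mem_erase hx hv').mpr rfl).trans
        (Finset.mem_singleton.mp hy).symm⟩

lemma mem_image_contractMap_self_iff (hX : X ⊆ V) (huv : u ≠ v)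
    (hx : x ∉ (V.erase u).erase v) : x ∈ contractMap u v x '' (X ∩ ↑(V.erase u)) ↔ v ∈ X := by
  constructor
  · rintro ⟨w, ⟨hwX, hw⟩, e⟩
    rwa [← (contractMap_eq_iff_of_mem_erase hx hw).mp e]
  · intro hvX
    have hv' : v ∈ V.erase u := Finset.mem_erase.mpr ⟨Ne.symm huv, hX hvX⟩
    exact ⟨v, ⟨hvX, hv'⟩, (contractMap_eq_iff_of_mem_erase hx hv').mpr rfl⟩

lemma mem_image_contractMap_iff_of_notMem (hX : X ⊆ V) (hw : w ∉ ({u, v, x} : Set ℕ)) :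
    w ∈ contractMap u v x '' (X ∩ ↑(V.erase u)) ↔ w ∈ X := by
  simp only [Set.mem_insert_iff, Set.mem_singleton_iff, not_or] at hw
  obtain ⟨hwu, hwv, hwx⟩ := hw
  constructor
  · rintro ⟨w', ⟨hw'X, hw'⟩, rfl⟩
    rw [contractMap_of_mem_erase hw'] at hwx ⊢
    split_ifs at hwx ⊢
    · exact absurd rfl hwx
    · exact hw'X
  · exact fun hwX => ⟨w, ⟨hwX, Finset.mem_erase.mpr ⟨hwu, hX hwX⟩⟩, contractMap_of_ne hwu hwv⟩

lemma mem_butterflyContract_arcs {a b : ℕ} :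
    (a, b) ∈ (butterflyContract D u v x).arcs ↔ a ≠ b ∧ ∃ a₀ b₀, (a₀, b₀) ∈ D.arcs ∧
      (a₀, b₀) ≠ (u, v) ∧ contractMap u v x a₀ = a ∧ contractMap u v x b₀ = b := by
  simp only [butterflyContract, Finset.mem_filter, Finset.mem_image, Finset.mem_erase,
    Prod.exists, Prod.mk.injEq, contractMap]
  tauto

lemma mem_arcs_of_mem_butterflyContract {a b : ℕ}
    (h : (a, b) ∈ (butterflyContract D u v x).arcs) (ha : a ≠ x) (hb : b ≠ x) :
    (a, b) ∈ D.arcs ∧ a ≠ u ∧ a ≠ v ∧ b ≠ u ∧ b ≠ v := by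
  obtain ⟨-, a₀, b₀, hmem, -, rfl, rfl⟩ := mem_butterflyContract_arcs.mp h
  obtain ⟨ha₀u, ha₀v⟩ := ne_of_contractMap_ne ha
  obtain ⟨hb₀u, hb₀v⟩ := ne_of_contractMap_ne hb
  rw [contractMap_of_ne ha₀u ha₀v, contractMap_of_ne hb₀u hb₀v]
  exact ⟨hmem, ha₀u, ha₀v, hb₀u, hb₀v⟩

lemma mem_arcs_of_into_mem_butterflyContract (hx : x ∉ (D.verts.erase u).erase v) {a : ℕ}
    (h : (a, x) ∈ (butterflyContract D u v x).arcs) :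
    a ≠ u ∧ a ≠ v ∧ ((a, u) ∈ D.arcs ∨ (a, v) ∈ D.arcs) := by
  obtain ⟨hax, a₀, b₀, hmem, -, rfl, hb₀⟩ := mem_butterflyContract_arcs.mp h
  obtain ⟨ha₀u, ha₀v⟩ := ne_of_contractMap_ne hax
  rw [contractMap_of_ne ha₀u ha₀v]
  rcases (contractMap_eq_iff hx (D.arcs_mem _ hmem).2).mp hb₀ with rfl | rfl
  exacts [⟨ha₀u, ha₀v, Or.inl hmem⟩, ⟨ha₀u, ha₀v, Or.inr hmem⟩]

lemma mem_arcs_of_out_mem_butterflyContract (hx : x ∉ (D.verts.erase u).erase v) {b : ℕ}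
    (h : (x, b) ∈ (butterflyContract D u v x).arcs) :
    b ≠ u ∧ b ≠ v ∧ ((u, b) ∈ D.arcs ∨ (v, b) ∈ D.arcs) := by
  obtain ⟨hxb, a₀, b₀, hmem, -, ha₀, rfl⟩ := mem_butterflyContract_arcs.mp h
  obtain ⟨hb₀u, hb₀v⟩ := ne_of_contractMap_ne (Ne.symm hxb)
  rw [contractMap_of_ne hb₀u hb₀v]
  rcases (contractMap_eq_iff hx (D.arcs_mem _ hmem).1).mp ha₀ with rfl | rfl
  exacts [⟨hb₀u, hb₀v, Or.inl hmem⟩, ⟨hb₀u, hb₀v, Or.inr hmem⟩]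

lemma butterflyContract_reverse_arcs : (butterflyContract D.reverse v u x).arcs =
    (butterflyContract D u v x).arcs.image Prod.swap := by
  ext ⟨a, b⟩
  rw [Finset.mem_image_swap, Prod.swap_prod_mk, mem_butterflyContract_arcs,
    mem_butterflyContract_arcs, contractMap_comm]
  simp only [reverse, Finset.mem_image_swap, Prod.swap_prod_mk, Ne, Prod.mk.injEq]
  constructor
  · rintro ⟨hab, a₀, b₀, h, hne, rfl, rfl⟩
    exact ⟨Ne.symm hab, b₀, a₀, h, by tauto, rfl, rfl⟩
  · rintro ⟨hab, a₀, b₀, h, hne, rfl, rfl⟩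
    exact ⟨Ne.symm hab, b₀, a₀, h, by tauto, rfl, rfl⟩

lemma card_cutArcs_inter_le_cycPorosity_of_through {F₀ : Finset (ℕ × ℕ)} {A B : ℕ}
    (huv : (u, v) ∈ D.arcs) (hout : ∀ w, (u, w) ∈ D.arcs → w = v)
    (hx : x ∉ (D.verts.erase u).erase v) (hside : x ∈ X' ↔ v ∈ X)
    (hrest : ∀ w ∉ ({u, v, x} : Set ℕ), (w ∈ X' ↔ w ∈ X))
    (hF : (butterflyContract D u v x).IsCycleFamily (F₀ ∪ {(A, x), (x, B)}))
    (hF₀ : ∀ a ∈ F₀, a ∈ D.arcs ∧ a.1 ∉ ({u, v, x} : Set ℕ) ∧ a.2 ∉ ({u, v, x} : Set ℕ)) :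
    ((butterflyContract D u v x).cutArcs X' ∩ (F₀ ∪ {(A, x), (x, B)})).card ≤
      D.cycPorosity X := by
  set D' := butterflyContract D u v x
  have hAx' : (A, x) ∈ D'.arcs := hF.1 (by simp)
  have hxB' : (x, B) ∈ D'.arcs := hF.1 (by simp)
  have hAx : A ≠ x := D'.no_loops _ hAx'
  obtain ⟨hAu, hAv, hAin⟩ := mem_arcs_of_into_mem_butterflyContract hx hAx'
  obtain ⟨hBu, hBv, hBout⟩ := mem_arcs_of_out_mem_butterflyContract hx hxB'
  have hvB : (v, B) ∈ D.arcs := hBout.resolve_left fun h => hBv (hout B h)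
  have hBx : B ≠ x := Ne.symm (D'.no_loops _ hxB')
  have hAX := hrest A (by simp [hAu, hAv, hAx])
  have hBX := hrest B (by simp [hBu, hBv, hBx])
  have hAxB : ((A, x) : ℕ × ℕ) ≠ (x, B) := by simp [hAx]
  -- lift `A → x → B` to `A → v → B` if possible, and to `A → u → v → B` otherwise
  by_cases hAv' : (A, v) ∈ D.arcs
  · have hAvB : ((A, v) : ℕ × ℕ) ≠ (v, B) := by simp [hAv]
    refine card_cutArcs_inter_le_cycPorosity_of_replace (P := {(A, v), (v, B)}) hF hF₀
      (by simp [Finset.insert_subset_iff, hAv', hvB]) (by simp) (by simp) ?_ ?_ ?_ hrest ?_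
    rotate_left 3
    · rw [Finset.card_inter_eq_sum_ite, Finset.card_inter_eq_sum_ite, Finset.sum_pair hAxB,
        Finset.sum_pair hAvB]
      simp only [mem_cutArcs, hAx', hxB', hAv', hvB, true_and, hAX, hBX, hside]
      by_cases A ∈ X <;> by_cases B ∈ X <;> by_cases v ∈ X <;> simp [*]
    all_goals
      intro w hw
      simp only [Set.mem_insert_iff, Set.mem_singleton_iff] at hw
      simp only [outDeg_eq_sum, inDeg_eq_sum, Finset.sum_pair hAxB, Finset.sum_pair hAvB]
      split_ifs <;> omega
  · have hAu' : (A, u) ∈ D.arcs := hAin.resolve_right hAv'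
    have hAuv : (A, u) ∉ ({(u, v), (v, B)} : Finset (ℕ × ℕ)) := by simp [hAu, hAv]
    have huv' : u ≠ v := D.no_loops _ huv
    have huvB : ((u, v) : ℕ × ℕ) ≠ (v, B) := by simp [huv']
    refine card_cutArcs_inter_le_cycPorosity_of_replace (P := {(A, u), (u, v), (v, B)}) hF hF₀
      (by simp [Finset.insert_subset_iff, hAu', huv, hvB]) (by simp) (by simp) ?_ ?_ ?_ hrest ?_
    rotate_left 3
    · rw [Finset.card_inter_eq_sum_ite, Finset.card_inter_eq_sum_ite, Finset.sum_pair hAxB,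
        Finset.sum_insert hAuv, Finset.sum_pair huvB]
      simp only [mem_cutArcs, hAx', hxB', hAu', huv, hvB, true_and, hAX, hBX, hside]
      by_cases A ∈ X <;> by_cases B ∈ X <;> by_cases u ∈ X <;> by_cases v ∈ X <;> simp [*]
    all_goals
      intro w hw
      simp only [Set.mem_insert_iff, Set.mem_singleton_iff] at hw
      simp only [outDeg_eq_sum, inDeg_eq_sum, Finset.sum_pair hAxB, Finset.sum_insert hAuv,
        Finset.sum_pair huvB]
      split_ifs <;> omega

/-- `x` has to sit on the side of `v`: a cycle through `x` is lifted through `v`, and through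
`u` only on its way to `v`. -/
theorem cycPorosity_butterflyContract_le_of_out (huv : (u, v) ∈ D.arcs)
    (hout : ∀ w, (u, w) ∈ D.arcs → w = v) (hx : x ∉ (D.verts.erase u).erase v)
    (hside : x ∈ X' ↔ v ∈ X) (hrest : ∀ w ∉ ({u, v, x} : Set ℕ), (w ∈ X' ↔ w ∈ X)) :
    (butterflyContract D u v x).cycPorosity X' ≤ D.cycPorosity X := by
  refine cycPorosity_le_iff.mpr fun F hF => ?_
  set F₀ := F.filter fun a => ¬(a.1 = x ∨ a.2 = x)
  have hF₀ (a : ℕ × ℕ) (ha : a ∈ F₀) :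
      a ∈ D.arcs ∧ a.1 ∉ ({u, v, x} : Set ℕ) ∧ a.2 ∉ ({u, v, x} : Set ℕ) := by
    obtain ⟨haF, hax⟩ := Finset.mem_filter.mp ha
    simp only [not_or] at hax
    obtain ⟨ha, h1u, h1v, h2u, h2v⟩ := mem_arcs_of_mem_butterflyContract (hF.1 haF) hax.1 hax.2
    simp only [Set.mem_insert_iff, Set.mem_singleton_iff, not_or]
    exact ⟨ha, ⟨h1u, h1v, hax.1⟩, h2u, h2v, hax.2⟩
  have hsplit : F = F₀ ∪ F.filter fun a => a.1 = x ∨ a.2 = x :=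
    ((Finset.union_comm _ _).trans (Finset.filter_union_filter_not_eq _ _)).symm
  rcases hF.filter_incident_eq x with hQ | ⟨A, B, -, -, hQ⟩
  · rw [hQ] at hsplit
    rw [hsplit] at hF ⊢
    refine card_cutArcs_inter_le_cycPorosity_of_replace (P := ∅) hF hF₀ (Finset.empty_subset _)
      (by simp) (by simp) (fun _ _ => rfl) (fun _ _ => rfl) (by simp [outDeg, inDeg]) hrest
      (by simp)
  · rw [hQ] at hsplit
    rw [hsplit] at hF ⊢
    exact card_cutArcs_inter_le_cycPorosity_of_through huv hout hx hside hrest hF hF₀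

theorem cycPorosity_butterflyContract_le_of_in (huv : (u, v) ∈ D.arcs)
    (hin : ∀ w, (w, v) ∈ D.arcs → w = u) (hx : x ∉ (D.verts.erase u).erase v)
    (hside : x ∈ X' ↔ u ∈ X) (hrest : ∀ w ∉ ({u, v, x} : Set ℕ), (w ∈ X' ↔ w ∈ X)) :
    (butterflyContract D u v x).cycPorosity X' ≤ D.cycPorosity X := by
  have hx' : x ∉ (D.reverse.verts.erase v).erase u := by
    rwa [show D.reverse.verts = D.verts from rfl, Finset.erase_right_comm]
  calc (butterflyContract D u v x).cycPorosity X'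
      = (butterflyContract D.reverse v u x).cycPorosity X' :=
        (cycPorosity_eq_of_arcs_eq_image_swap butterflyContract_reverse_arcs).symm
    _ ≤ D.reverse.cycPorosity X :=
        cycPorosity_butterflyContract_le_of_out (Finset.mem_image_of_mem _ huv)
          (fun w hw => hin w (Finset.mem_image_swap.mp hw)) hx' hside
          (by rwa [Set.insert_comm])
    _ = D.cycPorosity X := cycPorosity_reverse

end Contraction

end Dgraph

open SimpleGraph

section Graphs

variable {W W' : Type} {G : SimpleGraph W}

lemma SimpleGraph.Reachable.map_of_forall_adj {G' : SimpleGraph W'} (f : W → W')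
    (h : ∀ a b, G.Adj a b → G'.Reachable (f a) (f b)) {a b : W} (hab : G.Reachable a b) :
    G'.Reachable (f a) (f b) := by
  rw [reachable_iff_reflTransGen] at hab ⊢
  exact hab.lift' f fun a b hab => (reachable_iff_reflTransGen _ _).mp (h a b hab)

lemma SimpleGraph.Reachable.mem_of_adj_closed {S : Set W}
    (hS : ∀ a b, G.Adj a b → a ∈ S → b ∈ S) {a b : W} (hab : G.Reachable a b) (ha : a ∈ S) :
    b ∈ S := by
  rw [reachable_iff_reflTransGen] at hab
  induction hab with
  | refl => exact ha
  | tail _ hbc ih => exact hS _ _ hbc ih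

lemma SimpleGraph.IsAcyclic.not_adj_of_adj_of_adj (hG : G.IsAcyclic) {a b c : W}
    (hab : G.Adj a b) (hbc : G.Adj b c) : ¬ G.Adj a c := fun hac =>
  hG.cliqueFree le_rfl {a, b, c} (is3Clique_triple_iff.mpr ⟨hab, hac, hbc⟩)

lemma Set.eq_or_eq_of_ncard_eq_three {S : Set W} (hS : S.ncard = 3) {l a b c : W} (hl : l ∈ S)
    (ha : a ∈ S) (hb : b ∈ S) (hc : c ∈ S) (hla : l ≠ a) (hlb : l ≠ b) (hab : a ≠ b)
    (hlc : l ≠ c) : c = a ∨ c = b := by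
  by_contra! h
  have hsub : ({l, a, b, c} : Set W) ⊆ S := by simp [Set.insert_subset_iff, *]
  have h4 : ({l, a, b, c} : Set W).ncard = 4 := by
    rw [Set.ncard_insert_of_notMem (by simp [*]),
      Set.ncard_insert_of_notMem (by simp [*, Ne.symm h.1]), Set.ncard_pair (Ne.symm h.2)]
  have := Set.ncard_le_ncard hsub (Set.finite_of_ncard_pos (by omega))
  omega

lemma Subtype.sym2_val_eq_iff {P : W → Prop} {a b c d : Subtype P} :
    s(a.1, b.1) = s(c.1, d.1) ↔ s(a, b) = s(c, d) := by
  simp [Subtype.ext_iff]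

end Graphs

section Leaves

variable {W : Type} {T : SimpleGraph W} {l n : W}

lemma IsTreeLeaf.neighborSet_eq [Finite W] (hl : IsTreeLeaf T l) (h : T.Adj l n) :
    T.neighborSet l = {n} :=
  Set.eq_singleton_iff_unique_mem.mpr ⟨h, fun y hy => (Set.ncard_le_one).mp hl y hy n h⟩

lemma IsTreeLeaf.exists_neighborSet_eq [Finite W] (hT : T.Connected) (hl : IsTreeLeaf T l)
    {m : W} (hm : m ≠ l) : ∃ n, T.neighborSet l = {n} := by
  obtain ⟨p⟩ := hT.preconnected l m
  cases p with
  | nil => exact absurd rfl hm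
  | cons h _ => exact ⟨_, hl.neighborSet_eq h⟩

lemma IsCubicTree.ncard_neighborSet_eq_three [Finite W] (hT : IsCubicTree T)
    (hl : T.neighborSet l = {n}) {m : W} (hml : m ≠ l) (hmn : m ≠ n) :
    (T.neighborSet n).ncard = 3 := by
  have hln : T.Adj l n := by simp [← mem_neighborSet, hl]
  -- if `n` were a leaf as well, `{l, n}` would be all of `T`
  refine hT.2 n fun hn => ?_
  have hn' := hn.neighborSet_eq hln.symm
  have hclosed : ∀ a b, T.Adj a b → a ∈ ({l, n} : Set W) → b ∈ ({l, n} : Set W) := by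
    rintro a b hab (rfl | rfl)
    · simp [← mem_neighborSet, hl] at hab
      simp [hab]
    · simp [← mem_neighborSet, hn'] at hab
      simp [hab]
  have := (hT.1.connected.preconnected l m).mem_of_adj_closed hclosed (by simp)
  simp_all

lemma exists_adj_ne_of_one_lt_ncard (hn : 1 < (T.neighborSet n).ncard) (a : W) :
    ∃ c, T.Adj n c ∧ c ≠ a := by
  by_contra! h
  have := Set.ncard_le_ncard (show T.neighborSet n ⊆ {a} from h) (Set.finite_singleton a)
  rw [Set.ncard_singleton] at this
  omega

end Leaves

/-- `T` with the leaf `l` deleted and its neighbour `n` suppressed: the other neighbours of `n`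
become adjacent. -/
def pruneLeaf {W : Type} (T : SimpleGraph W) (l n : W) : SimpleGraph {w // w ≠ l ∧ w ≠ n} :=
  SimpleGraph.fromRel fun a b => T.Adj a b ∨ (T.Adj a n ∧ T.Adj b n)

section Prune

variable {W : Type} {T : SimpleGraph W} {l n : W}

local notation "W'" => {w : W // w ≠ l ∧ w ≠ n}

lemma pruneLeaf_adj {a b : W'} :
    (pruneLeaf T l n).Adj a b ↔ a ≠ b ∧ (T.Adj a b ∨ (T.Adj a n ∧ T.Adj b n)) := by
  simp only [pruneLeaf, fromRel_adj, T.adj_comm b.1 a.1]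
  tauto

lemma image_val_neighborSet_pruneLeaf (hl : T.neighborSet l = {n}) (w : W') :
    Subtype.val '' (pruneLeaf T l n).neighborSet w =
      (T.neighborSet w \ {n}) ∪ {y | T.Adj w n ∧ T.Adj y n ∧ y ≠ l ∧ y ≠ w} := by
  have hnl (y : W) (hy : T.Adj y l) : y = n := by
    simpa [hl] using (show y ∈ T.neighborSet l from hy.symm)
  ext y
  constructor
  · rintro ⟨y, hy, rfl⟩
    obtain ⟨hwy, h | h⟩ := pruneLeaf_adj.mp hy
    · exact Or.inl ⟨h, y.2.2⟩
    · exact Or.inr ⟨h.1, h.2, y.2.1, fun e => hwy (Subtype.ext e.symm)⟩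
  · rintro (⟨h, hyn⟩ | ⟨hwn, hyn, hyl, hyw⟩)
    · refine ⟨⟨y, fun hy => w.2.2 (hnl _ (hy ▸ h)), hyn⟩, pruneLeaf_adj.mpr ⟨?_, Or.inl h⟩, rfl⟩
      exact fun e => T.ne_of_adj h (congrArg Subtype.val e)
    · refine ⟨⟨y, hyl, T.ne_of_adj hyn⟩, pruneLeaf_adj.mpr ⟨?_, Or.inr ⟨hwn, hyn⟩⟩, rfl⟩
      exact fun e => hyw (congrArg Subtype.val e).symm

lemma ncard_neighborSet_pruneLeaf [Finite W] (hT : T.IsAcyclic) (hl : T.neighborSet l = {n})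
    (hn : (T.neighborSet n).ncard = 3) (w : W') :
    ((pruneLeaf T l n).neighborSet w).ncard = (T.neighborSet w).ncard := by
  rw [← Set.ncard_image_of_injective _ Subtype.val_injective, image_val_neighborSet_pruneLeaf hl]
  by_cases hwn : T.Adj w n
  -- `w` trades its neighbour `n` for the third neighbour of `n`
  · have hnew : {y | T.Adj w n ∧ T.Adj y n ∧ y ≠ l ∧ y ≠ w} = T.neighborSet n \ {l, w.1} := by
      ext y
      simp [hwn, T.adj_comm n y, and_comm]
    have hdisj : Disjoint (T.neighborSet w \ {n}) (T.neighborSet n \ {l, w.1}) :=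
      Set.disjoint_left.mpr fun y hy hy' => hT.not_adj_of_adj_of_adj hwn hy'.1 hy.1
    have hlw : ({l, w.1} : Set W) ⊆ T.neighborSet n := by
      have : n ∈ T.neighborSet l := hl ▸ rfl
      simp only [Set.insert_subset_iff, Set.singleton_subset_iff, mem_neighborSet]
      exact ⟨this.symm, hwn.symm⟩
    rw [hnew, Set.ncard_union_eq hdisj,
      Set.ncard_sdiff_singleton_of_mem (show n ∈ T.neighborSet w from hwn),
      Set.ncard_sdiff hlw, hn, Set.ncard_pair (Ne.symm w.2.1)]
    have : 0 < (T.neighborSet w).ncard := (Set.ncard_pos).mpr ⟨n, hwn⟩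
    omega
  · have hnew : {y | T.Adj w n ∧ T.Adj y n ∧ y ≠ l ∧ y ≠ w} = ∅ := by simp [hwn]
    rw [hnew, Set.union_empty, Set.sdiff_singleton_eq_self (show n ∉ T.neighborSet w from hwn)]

lemma isTreeLeaf_pruneLeaf_iff [Finite W] (hT : T.IsAcyclic) (hl : T.neighborSet l = {n})
    (hn : (T.neighborSet n).ncard = 3) (w : W') :
    IsTreeLeaf (pruneLeaf T l n) w ↔ IsTreeLeaf T w := by
  rw [IsTreeLeaf, IsTreeLeaf, ncard_neighborSet_pruneLeaf hT hl hn]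

lemma sym2_eq_of_adj_of_ncard_eq_three (hl : T.neighborSet l = {n})
    (hn : (T.neighborSet n).ncard = 3) {a b s t : W'} (ha : T.Adj a n) (hb : T.Adj b n)
    (hs : T.Adj s n) (ht : T.Adj t n) (hab : a ≠ b) (hst : s ≠ t) : s(a, b) = s(s, t) := by
  have hln : l ∈ T.neighborSet n := (show n ∈ T.neighborSet l from hl ▸ rfl).symm
  have key (c : W') (hc : T.Adj c n) : c = a ∨ c = b := by
    simpa [Subtype.ext_iff] using Set.eq_or_eq_of_ncard_eq_three hn hln ha.symm hb.symm hc.symm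
      (Ne.symm a.2.1) (Ne.symm b.2.1) (fun e => hab (Subtype.ext e)) (Ne.symm c.2.1)
  rcases key s hs with rfl | rfl <;> rcases key t ht with rfl | rfl
  all_goals first | exact absurd rfl hst | exact Sym2.eq_swap | rfl

lemma reachable_pruneLeaf_of_reachable (hl : T.neighborSet l = {n}) {G : SimpleGraph W}
    (hG : G ≤ T) {G' : SimpleGraph W'} (c : W')
    (hc : ∀ y : W', G.Adj n y → c = y ∨ G'.Adj c y) (hold : ∀ a b : W', G.Adj a b → G'.Adj a b)
    {a b : W'} (h : G.Reachable a b) : G'.Reachable a b := by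
  classical
  -- collapse `l` and `n` onto `c`
  let f : W → W' := fun w => if hw : w ≠ l ∧ w ≠ n then ⟨w, hw⟩ else c
  have hf (w : W) (hw : w ≠ l ∧ w ≠ n) : f w = ⟨w, hw⟩ := dif_pos hw
  have hout (x y : W) (hxy : G.Adj x y) (hx : ¬(x ≠ l ∧ x ≠ n)) : G'.Reachable (f x) (f y) := by
    rw [show f x = c from dif_neg hx]
    by_cases hy : y ≠ l ∧ y ≠ n
    · obtain rfl : x = n := by
        by_contra hxn
        have hy' : y ∈ T.neighborSet l := hG ((show x = l by tauto) ▸ hxy)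
        rw [hl] at hy'
        exact hy.2 hy'
      rw [hf y hy]
      rcases hc ⟨y, hy⟩ hxy with h | h
      · rw [h]
      · exact h.reachable
    · rw [show f y = c from dif_neg hy]
  have hadj (x y : W) (hxy : G.Adj x y) : G'.Reachable (f x) (f y) := by
    by_cases hx : x ≠ l ∧ x ≠ n
    · by_cases hy : y ≠ l ∧ y ≠ n
      · rw [hf x hx, hf y hy]
        exact (hold ⟨x, hx⟩ ⟨y, hy⟩ hxy).reachable
      · exact (hout y x hxy.symm hy).symm
    · exact hout x y hxy hx
  have hmap := h.map_of_forall_adj f hadj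
  rwa [hf a a.2, hf b b.2] at hmap

lemma reachable_deleteEdges_pruneLeaf_iff_of_adj (hT : T.IsAcyclic)
    (hl : T.neighborSet l = {n}) (hn : (T.neighborSet n).ncard = 3) {s t : W'}
    (hst : T.Adj s t) (a b : W') :
    ((pruneLeaf T l n).deleteEdges {s(s, t)}).Reachable a b ↔
      (T.deleteEdges {s(s.1, t.1)}).Reachable a b := by
  constructor
  · refine fun h => h.map_of_forall_adj Subtype.val fun x y hxy => ?_
    simp only [deleteEdges_adj, Set.mem_singleton_iff, pruneLeaf_adj] at hxy
    obtain ⟨⟨-, hxy' | ⟨hxn, hyn⟩⟩, he⟩ := hxy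
    · refine Adj.reachable ?_
      simp only [deleteEdges_adj, Set.mem_singleton_iff, Subtype.sym2_val_eq_iff]
      exact ⟨hxy', he⟩
    · have hadj_n (z : W) (hz : T.Adj z n) : (T.deleteEdges {s(s.1, t.1)}).Adj z n := by
        simp only [deleteEdges_adj, Set.mem_singleton_iff, Sym2.eq_iff]
        exact ⟨hz, by rintro (⟨-, h⟩ | ⟨-, h⟩); exacts [t.2.2 h.symm, s.2.2 h.symm]⟩
      exact (hadj_n _ hxn).reachable.trans (hadj_n _ hyn).reachable.symm
  · obtain ⟨c, hc, hcl⟩ :=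
      exists_adj_ne_of_one_lt_ncard (show 1 < (T.neighborSet n).ncard by omega) l
    refine reachable_pruneLeaf_of_reachable hl (deleteEdges_le _) ⟨c, hcl, (T.ne_of_adj hc).symm⟩
      (fun y hy => ?_) (fun x y hxy => ?_)
    · by_cases hcy : ⟨c, hcl, (T.ne_of_adj hc).symm⟩ = y
      · exact Or.inl hcy
      simp only [deleteEdges_adj, Set.mem_singleton_iff, pruneLeaf_adj] at hy ⊢
      refine Or.inr ⟨⟨hcy, Or.inr ⟨hc.symm, hy.1.symm⟩⟩, fun he => ?_⟩
      have hcy' : T.Adj c y := by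
        rw [← mem_edgeSet, show s(c, y.1) = s(s.1, t.1) from Subtype.sym2_val_eq_iff.mpr he]
        exact hst
      exact hT.not_adj_of_adj_of_adj hc.symm hy.1 hcy'
    · simp only [deleteEdges_adj, Set.mem_singleton_iff, pruneLeaf_adj,
        Subtype.sym2_val_eq_iff] at hxy ⊢
      exact ⟨⟨fun e => T.ne_of_adj hxy.1 (congrArg Subtype.val e), Or.inl hxy.1⟩, hxy.2⟩

lemma reachable_deleteEdges_pruneLeaf_iff_of_adj_of_adj (hT : T.IsAcyclic)
    (hl : T.neighborSet l = {n}) (hn : (T.neighborSet n).ncard = 3) {s t : W'}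
    (hs : T.Adj s n) (ht : T.Adj t n) (hst : s ≠ t) (a b : W') :
    ((pruneLeaf T l n).deleteEdges {s(s, t)}).Reachable a b ↔
      (T.deleteEdges {s(s.1, n)}).Reachable a b := by
  constructor
  · refine fun h => h.map_of_forall_adj Subtype.val fun x y hxy => ?_
    simp only [deleteEdges_adj, Set.mem_singleton_iff, pruneLeaf_adj] at hxy
    obtain ⟨⟨hne, hxy' | ⟨hxn, hyn⟩⟩, he⟩ := hxy
    · refine Adj.reachable ?_
      simp only [deleteEdges_adj, Set.mem_singleton_iff, Sym2.eq_iff]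
      exact ⟨hxy', by rintro (⟨-, h⟩ | ⟨h, -⟩); exacts [y.2.2 h, x.2.2 h]⟩
    · exact absurd (sym2_eq_of_adj_of_ncard_eq_three hl hn hxn hyn hs ht hne hst) he
  · refine reachable_pruneLeaf_of_reachable hl (deleteEdges_le _) t (fun y hy => ?_)
      (fun x y hxy => ?_)
    · by_cases hty : t = y
      · exact Or.inl hty
      simp only [deleteEdges_adj, Set.mem_singleton_iff, pruneLeaf_adj] at hy ⊢
      have hys : y ≠ s := fun e => hy.2 (by rw [e, Sym2.eq_swap])
      refine Or.inr ⟨⟨hty, Or.inr ⟨ht, hy.1.symm⟩⟩, fun he => ?_⟩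
      rcases Sym2.eq_iff.mp he with ⟨-, h⟩ | ⟨-, h⟩
      exacts [hty h.symm, hys h]
    · simp only [deleteEdges_adj, Set.mem_singleton_iff, pruneLeaf_adj] at hxy ⊢
      refine ⟨⟨fun e => T.ne_of_adj hxy.1 (congrArg Subtype.val e), Or.inl hxy.1⟩, fun he => ?_⟩
      have hst' : T.Adj s t := by
        rw [← mem_edgeSet, ← Subtype.sym2_val_eq_iff.mpr he]
        exact hxy.1
      exact hT.not_adj_of_adj_of_adj hs.symm hst' ht.symm

lemma exists_reachable_iff_of_pruneLeaf_adj (hT : T.IsAcyclic) (hl : T.neighborSet l = {n})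
    (hn : (T.neighborSet n).ncard = 3) {s t : W'} (hst : (pruneLeaf T l n).Adj s t) :
    ∃ t₀, T.Adj s t₀ ∧ (T.deleteEdges {s(s.1, t₀)}).Reachable t t₀ ∧ ∀ a b : W',
      ((pruneLeaf T l n).deleteEdges {s(s, t)}).Reachable a b ↔
        (T.deleteEdges {s(s.1, t₀)}).Reachable a b := by
  obtain ⟨hne, hst' | ⟨hs, ht⟩⟩ := pruneLeaf_adj.mp hst
  · exact ⟨t, hst', Reachable.refl _, reachable_deleteEdges_pruneLeaf_iff_of_adj hT hl hn hst'⟩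
  · refine ⟨n, hs, Adj.reachable ?_,
      reachable_deleteEdges_pruneLeaf_iff_of_adj_of_adj hT hl hn hs ht hne⟩
    simp only [deleteEdges_adj, Set.mem_singleton_iff, Sym2.eq_iff]
    exact ⟨ht, by rintro (⟨h, -⟩ | ⟨-, h⟩); exacts [hne (Subtype.ext h).symm, s.2.2 h.symm]⟩

lemma isCubicTree_pruneLeaf [Finite W] (hT : IsCubicTree T) (hl : T.neighborSet l = {n})
    (hn : (T.neighborSet n).ncard = 3) : IsCubicTree (pruneLeaf T l n) := by
  have hacyc := hT.1.isAcyclic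
  obtain ⟨c, hc, hcl⟩ :=
    exists_adj_ne_of_one_lt_ncard (show 1 < (T.neighborSet n).ncard by omega) l
  let c' : W' := ⟨c, hcl, (T.ne_of_adj hc).symm⟩
  have hconn : (pruneLeaf T l n).Connected := by
    have : Nonempty W' := ⟨c'⟩
    refine ⟨fun a b => reachable_pruneLeaf_of_reachable hl le_rfl c' (fun y hy => ?_)
      (fun x y hxy => pruneLeaf_adj.mpr ⟨fun e => T.ne_of_adj hxy (congrArg Subtype.val e),
        Or.inl hxy⟩) (hT.1.connected.preconnected a b)⟩
    by_cases hcy : c' = y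
    · exact Or.inl hcy
    · exact Or.inr (pruneLeaf_adj.mpr ⟨hcy, Or.inr ⟨hc.symm, hy.symm⟩⟩)
  have hacyc' : (pruneLeaf T l n).IsAcyclic := by
    refine isAcyclic_iff_forall_adj_isBridge.mpr fun s t hst => isBridge_iff.mpr fun h => ?_
    obtain ⟨t₀, hst₀, ht₀, hiff⟩ := exists_reachable_iff_of_pruneLeaf_adj hacyc hl hn hst
    exact isBridge_iff.mp (isAcyclic_iff_forall_adj_isBridge.mp hacyc hst₀)
      (((hiff s t).mp h).trans ht₀)
  refine ⟨⟨hconn, hacyc'⟩, fun w hw => ?_⟩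
  rw [ncard_neighborSet_pruneLeaf hacyc hl hn]
  exact hT.2 w (mt (isTreeLeaf_pruneLeaf_iff hacyc hl hn w).mpr hw)

end Prune

/-- The data of a cycle decomposition of a digraph with vertex set `V`. -/
def IsLeafLabelling {W : Type} (T : SimpleGraph W) (φ : W → ℕ) (V : Finset ℕ) : Prop :=
  IsCubicTree T ∧ Set.BijOn φ {l | IsTreeLeaf T l} ↑V

def ShoresTrace {W W₀ : Type} (T : SimpleGraph W) (φ : W → ℕ) (T₀ : SimpleGraph W₀)
    (φ₀ : W₀ → ℕ) (V : Set ℕ) : Prop :=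
  ∀ s t, T.Adj s t → ∃ s₀ t₀, T₀.Adj s₀ t₀ ∧ treeShore T φ s t = treeShore T₀ φ₀ s₀ t₀ ∩ V

section Labelling

variable {W : Type} {T : SimpleGraph W} {φ : W → ℕ} {V : Finset ℕ}

lemma IsLeafLabelling.treeShore_subset (h : IsLeafLabelling T φ V) (s t : W) :
    treeShore T φ s t ⊆ ↑V := by
  rintro _ ⟨w, ⟨hw, -⟩, rfl⟩
  exact h.2.1 hw

lemma ShoresTrace.trans {W₁ W₂ : Type} {T₁ : SimpleGraph W₁} {φ₁ : W₁ → ℕ}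
    {T₂ : SimpleGraph W₂} {φ₂ : W₂ → ℕ} {V₁ V₂ : Set ℕ} (h₂ : ShoresTrace T₂ φ₂ T₁ φ₁ V₂)
    (h₁ : ShoresTrace T₁ φ₁ T φ V₁) (hV : V₂ ⊆ V₁) : ShoresTrace T₂ φ₂ T φ V₂ := by
  intro s t hst
  obtain ⟨s₁, t₁, hst₁, e₁⟩ := h₂ s t hst
  obtain ⟨s₀, t₀, hst₀, e₀⟩ := h₁ s₁ t₁ hst₁
  exact ⟨s₀, t₀, hst₀, by rw [e₁, e₀, Set.inter_assoc, Set.inter_eq_right.mpr hV]⟩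

theorem IsLeafLabelling.exists_erase [Finite W] (h : IsLeafLabelling T φ V) (hV : 3 ≤ V.card)
    {a : ℕ} (ha : a ∈ V) :
    ∃ (W' : Type) (_ : Finite W') (T' : SimpleGraph W') (φ' : W' → ℕ),
      IsLeafLabelling T' φ' (V.erase a) ∧ ShoresTrace T' φ' T φ ↑(V.erase a) := by
  obtain ⟨hT, hφ⟩ := h
  obtain ⟨l, hl, rfl⟩ := hφ.2.2 ha
  obtain ⟨b, c, hb, hc, hbc⟩ := Finset.one_lt_card_iff.mp
    (by rw [Finset.card_erase_of_mem ha]; omega : 1 < (V.erase (φ l)).card)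
  obtain ⟨mb, -, rfl⟩ := hφ.2.2 (Finset.mem_of_mem_erase hb)
  obtain ⟨mc, -, rfl⟩ := hφ.2.2 (Finset.mem_of_mem_erase hc)
  have hmbl : mb ≠ l := fun e => (Finset.mem_erase.mp hb).1 (e ▸ rfl)
  have hmcl : mc ≠ l := fun e => (Finset.mem_erase.mp hc).1 (e ▸ rfl)
  obtain ⟨n, hln⟩ := hl.exists_neighborSet_eq hT.1.connected hmbl
  have hn : (T.neighborSet n).ncard = 3 := by
    by_cases hmbn : mb = n
    · exact hT.ncard_neighborSet_eq_three hln hmcl fun e => hbc (by rw [hmbn, ← e])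
    · exact hT.ncard_neighborSet_eq_three hln hmbl hmbn
  have hnleaf : ¬ IsTreeLeaf T n := by
    rw [IsTreeLeaf, hn]
    omega
  have hleaf := isTreeLeaf_pruneLeaf_iff hT.1.isAcyclic hln hn
  have hmem (w : {w : W // w ≠ l ∧ w ≠ n}) (hw : IsTreeLeaf T w) : φ w ∈ V.erase (φ l) :=
    Finset.mem_erase.mpr ⟨fun e => w.2.1 (hφ.2.1 hw hl e), hφ.1 hw⟩
  have hlift (w : W) (hw : IsTreeLeaf T w) (hwl : φ w ∈ V.erase (φ l)) : w ≠ l ∧ w ≠ n :=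
    ⟨fun e => (Finset.mem_erase.mp hwl).1 (e ▸ rfl), fun e => hnleaf (e ▸ hw)⟩
  refine ⟨_, inferInstance, pruneLeaf T l n, φ ∘ Subtype.val,
    ⟨isCubicTree_pruneLeaf hT hln hn, fun w hw => hmem w ((hleaf w).mp hw), ?_, ?_⟩, ?_⟩
  · exact fun w hw w' hw' e => Subtype.ext (hφ.2.1 ((hleaf w).mp hw) ((hleaf w').mp hw') e)
  · intro y hy
    obtain ⟨w, hw, rfl⟩ := hφ.2.2 (Finset.mem_of_mem_erase hy)
    exact ⟨⟨w, hlift w hw hy⟩, (hleaf _).mpr hw, rfl⟩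
  · intro s t hst
    obtain ⟨t₀, hst₀, -, hiff⟩ := exists_reachable_iff_of_pruneLeaf_adj hT.1.isAcyclic hln hn hst
    refine ⟨s, t₀, hst₀, Set.ext fun y => ⟨?_, ?_⟩⟩
    · rintro ⟨w, ⟨hw, hsw⟩, rfl⟩
      have hw' := (hleaf w).mp hw
      exact ⟨⟨w, ⟨hw', (hiff s w).mp hsw⟩, rfl⟩, hmem w hw'⟩
    · rintro ⟨⟨w, ⟨hw, hsw⟩, rfl⟩, hy⟩
      exact ⟨⟨w, hlift w hw hy⟩, ⟨(hleaf _).mpr hw, (hiff s ⟨w, hlift w hw hy⟩).mpr hsw⟩, rfl⟩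

lemma isLeafLabelling_singleton (p : ℕ) :
    IsLeafLabelling (⊥ : SimpleGraph Unit) (fun _ => p) {p} := by
  have hleaf (t : Unit) : IsTreeLeaf (⊥ : SimpleGraph Unit) t := by simp [IsTreeLeaf]
  refine ⟨⟨⟨connected_bot_iff.mpr ⟨inferInstance, inferInstance⟩, isAcyclic_bot⟩,
    fun t ht => absurd (hleaf t) ht⟩, fun _ _ => Finset.mem_singleton_self p,
    fun _ _ _ _ _ => rfl, fun y hy => ⟨(), hleaf (), (Finset.mem_singleton.mp hy).symm⟩⟩

lemma isLeafLabelling_pair {p q : ℕ} (hpq : p ≠ q) :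
    IsLeafLabelling (⊤ : SimpleGraph Bool) (fun c => if c then p else q) {p, q} := by
  have hleaf (t : Bool) : IsTreeLeaf (⊤ : SimpleGraph Bool) t := by
    have : (⊤ : SimpleGraph Bool).neighborSet t = {!t} := by
      ext y
      cases t <;> cases y <;> simp
    rw [IsTreeLeaf, this, Set.ncard_singleton]
  refine ⟨⟨⟨connected_top, IsAcyclic.of_card_le_two (by simp)⟩, fun t ht => absurd (hleaf t) ht⟩,
    ?_, ?_, ?_⟩
  · rintro (_ | _) - <;> simp
  · rintro (_ | _) - (_ | _) - e <;> simp_all [eq_comm]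
  · intro y hy
    rcases Finset.mem_insert.mp hy with rfl | hy
    · exact ⟨true, hleaf true, rfl⟩
    · exact ⟨false, hleaf false, (Finset.mem_singleton.mp hy).symm⟩

theorem IsLeafLabelling.exists_restrict [Finite W] (h : IsLeafLabelling T φ V) {V' : Finset ℕ}
    (hV' : V' ⊆ V) (hne : V'.Nonempty) :
    ∃ (W' : Type) (_ : Finite W') (T' : SimpleGraph W') (φ' : W' → ℕ),
      IsLeafLabelling T' φ' V' ∧ ShoresTrace T' φ' T φ ↑V' := by
  induction hk : (V \ V').card generalizing W T φ V with
  | zero =>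
    obtain rfl : V = V' :=
      (Finset.sdiff_eq_empty_iff_subset.mp (Finset.card_eq_zero.mp hk)).antisymm hV'
    exact ⟨W, inferInstance, T, φ, h, fun s t hst =>
      ⟨s, t, hst, (Set.inter_eq_left.mpr (h.treeShore_subset s t)).symm⟩⟩
  | succ k ih =>
    obtain ⟨a, ha⟩ : (V \ V').Nonempty := Finset.card_pos.mp (by omega)
    obtain ⟨haV, haV'⟩ := Finset.mem_sdiff.mp ha
    by_cases hV : 3 ≤ V.card
    · obtain ⟨W₁, _, T₁, φ₁, h₁, htr₁⟩ := h.exists_erase hV haV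
      have hsub : V' ⊆ V.erase a := fun y hy =>
        Finset.mem_erase.mpr ⟨fun e => haV' (e ▸ hy), hV' hy⟩
      obtain ⟨W', _, T', φ', h', htr'⟩ := ih h₁ hsub (by
        rw [Finset.erase_sdiff_comm, Finset.card_erase_of_mem ha, hk]; rfl)
      exact ⟨W', inferInstance, T', φ', h', htr'.trans htr₁ (Finset.coe_subset.mpr hsub)⟩
    · have hlt : V'.card < V.card := Finset.card_lt_card (Finset.ssubset_iff_subset_ne.mpr
        ⟨hV', fun e => haV' (e ▸ haV)⟩)
      obtain ⟨p, rfl⟩ := Finset.card_eq_one.mp (show V'.card = 1 by have := hne.card_pos; omega)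
      exact ⟨Unit, inferInstance, ⊥, fun _ => p, isLeafLabelling_singleton p,
        fun s t hst => absurd hst (by simp)⟩

end Labelling

def attachCherryRel {W : Type} (T : SimpleGraph W) (l : W) : W ⊕ Bool → W ⊕ Bool → Prop
  | .inl a, .inl b => T.Adj a b
  | .inl a, .inr _ => a = l
  | .inr _, _ => False

/-- `T` with two new leaves `.inr false` and `.inr true` attached to `l`. -/
def attachCherry {W : Type} (T : SimpleGraph W) (l : W) : SimpleGraph (W ⊕ Bool) :=
  SimpleGraph.fromRel (attachCherryRel T l)

section Grow

variable {W : Type} {T : SimpleGraph W} {φ : W → ℕ} {V : Finset ℕ} {l : W}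

@[simp] lemma attachCherry_adj_inl_inl {a b : W} :
    (attachCherry T l).Adj (.inl a) (.inl b) ↔ T.Adj a b := by
  simp only [attachCherry, fromRel_adj, attachCherryRel, ne_eq, Sum.inl.injEq, T.adj_comm b a,
    or_self, and_iff_right_iff_imp]
  exact T.ne_of_adj

@[simp] lemma attachCherry_adj_inl_inr {a : W} {c : Bool} :
    (attachCherry T l).Adj (.inl a) (.inr c) ↔ a = l := by
  simp [attachCherry, fromRel_adj, attachCherryRel]

@[simp] lemma attachCherry_adj_inr_inl {a : W} {c : Bool} :
    (attachCherry T l).Adj (.inr c) (.inl a) ↔ a = l := by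
  simp [attachCherry, fromRel_adj, attachCherryRel]

@[simp] lemma attachCherry_adj_inr_inr {c d : Bool} :
    ¬ (attachCherry T l).Adj (.inr c) (.inr d) := by
  simp [attachCherry, fromRel_adj, attachCherryRel]

lemma neighborSet_attachCherry_inr (c : Bool) :
    (attachCherry T l).neighborSet (.inr c) = {.inl l} := by
  ext (y | y) <;> simp [eq_comm]

lemma ncard_neighborSet_attachCherry_inl {a : W} (ha : a ≠ l) :
    ((attachCherry T l).neighborSet (.inl a)).ncard = (T.neighborSet a).ncard := by
  have : (attachCherry T l).neighborSet (.inl a) = Sum.inl '' T.neighborSet a := by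
    ext (y | y) <;> simp [ha]
  rw [this, Set.ncard_image_of_injective _ Sum.inl_injective]

lemma ncard_neighborSet_attachCherry_self [Finite W] {n : W} (hl : T.neighborSet l = {n}) :
    ((attachCherry T l).neighborSet (.inl l)).ncard = 3 := by
  have : (attachCherry T l).neighborSet (.inl l) = {.inl n, .inr false, .inr true} := by
    have hl' (y : W) : T.Adj l y ↔ y = n := by rw [← mem_neighborSet, hl, Set.mem_singleton_iff]
    ext (y | y | y) <;> simp [hl']
  rw [this, Set.ncard_insert_of_notMem (by simp), Set.ncard_pair (by simp)]

lemma isTreeLeaf_attachCherry_inr (c : Bool) : IsTreeLeaf (attachCherry T l) (.inr c) := by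
  rw [IsTreeLeaf, neighborSet_attachCherry_inr, Set.ncard_singleton]

lemma isTreeLeaf_attachCherry_inl_iff [Finite W] {n : W} (hl : T.neighborSet l = {n}) {a : W} :
    IsTreeLeaf (attachCherry T l) (.inl a) ↔ a ≠ l ∧ IsTreeLeaf T a := by
  by_cases ha : a = l
  · rw [ha, IsTreeLeaf, ncard_neighborSet_attachCherry_self hl]
    simp
  · rw [IsTreeLeaf, IsTreeLeaf, ncard_neighborSet_attachCherry_inl ha]
    exact (and_iff_right ha).symm

lemma isBridge_attachCherry_inl_inr (c : Bool) : (attachCherry T l).IsBridge s(.inl l, .inr c) := by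
  refine isBridge_iff.mpr fun h => ?_
  refine h.mem_of_adj_closed (S := {y | y ≠ .inr c}) ?_ (by simp) rfl
  rintro y z hyz hy rfl
  rcases y with a | d <;> simp_all [deleteEdges_adj]

lemma isBridge_attachCherry_inl_inl (hT : T.IsAcyclic) {a b : W} (hab : T.Adj a b) :
    (attachCherry T l).IsBridge s(.inl a, .inl b) := by
  refine isBridge_iff.mpr fun h => ?_
  refine isBridge_iff.mp (isAcyclic_iff_forall_adj_isBridge.mp hT hab) ?_
  refine h.map_of_forall_adj (Sum.elim id fun _ => l) fun x y hxy => ?_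
  rcases x with x | x <;> rcases y with y | y <;>
    simp only [deleteEdges_adj, Set.mem_singleton_iff] at hxy
  · refine Adj.reachable ?_
    simp only [deleteEdges_adj, Set.mem_singleton_iff, Sum.elim_inl, id]
    refine ⟨attachCherry_adj_inl_inl.mp hxy.1, fun he => hxy.2 ?_⟩
    simpa [Sym2.eq_iff] using he
  · simp [attachCherry_adj_inl_inr.mp hxy.1]
  · simp [attachCherry_adj_inr_inl.mp hxy.1]
  · exact absurd hxy.1 attachCherry_adj_inr_inr

lemma isCubicTree_attachCherry [Finite W] (hT : IsCubicTree T) {n : W}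
    (hl : T.neighborSet l = {n}) : IsCubicTree (attachCherry T l) := by
  have hreach (x : W ⊕ Bool) : (attachCherry T l).Reachable x (.inl l) := by
    rcases x with a | c
    · exact (hT.1.connected.preconnected a l).map_of_forall_adj Sum.inl
        fun x y hxy => (attachCherry_adj_inl_inl.mpr hxy).reachable
    · exact (attachCherry_adj_inr_inl.mpr rfl).reachable
  refine ⟨⟨⟨fun x y => (hreach x).trans (hreach y).symm⟩,
    isAcyclic_iff_forall_adj_isBridge.mpr ?_⟩, ?_⟩
  · rintro (a | c) (b | d) hxy
    · exact isBridge_attachCherry_inl_inl hT.1.isAcyclic (attachCherry_adj_inl_inl.mp hxy)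
    · exact attachCherry_adj_inl_inr.mp hxy ▸ isBridge_attachCherry_inl_inr d
    · rw [Sym2.eq_swap]
      exact attachCherry_adj_inr_inl.mp hxy ▸ isBridge_attachCherry_inl_inr c
    · exact absurd hxy attachCherry_adj_inr_inr
  · rintro (a | c) hleaf
    · by_cases ha : a = l
      · rw [ha, ncard_neighborSet_attachCherry_self hl]
      · rw [ncard_neighborSet_attachCherry_inl ha]
        exact hT.2 a fun h => hleaf ((isTreeLeaf_attachCherry_inl_iff hl).mpr ⟨ha, h⟩)
    · exact absurd (isTreeLeaf_attachCherry_inr c) hleaf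

theorem IsLeafLabelling.exists_insert [Finite W] (h : IsLeafLabelling T φ V) (hV : 2 ≤ V.card)
    {a : ℕ} (ha : a ∉ V) :
    ∃ (W' : Type) (_ : Finite W') (T' : SimpleGraph W') (φ' : W' → ℕ),
      IsLeafLabelling T' φ' (insert a V) := by
  obtain ⟨hT, hφ⟩ := h
  obtain ⟨b, c, hb, hc, hbc⟩ := Finset.one_lt_card_iff.mp hV
  obtain ⟨l, hl, rfl⟩ := hφ.2.2 hb
  obtain ⟨m, -, rfl⟩ := hφ.2.2 hc
  obtain ⟨n, hln⟩ := hl.exists_neighborSet_eq hT.1.connected fun e => hbc (e ▸ rfl)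
  have hlV : φ l ∈ V := hφ.1 hl
  let φ' : W ⊕ Bool → ℕ := Sum.elim φ fun c => if c then a else φ l
  have hinl {w : W} := (isTreeLeaf_attachCherry_inl_iff hln (a := w)).mp
  have hne {w : W} (hw : IsTreeLeaf (attachCherry T l) (.inl w)) (c : Bool) :
      φ w ≠ if c then a else φ l := by
    obtain ⟨hwl, hw⟩ := hinl hw
    cases c
    · exact fun e => hwl (hφ.2.1 hw hl e)
    · intro e
      simp only [↓reduceIte] at e
      exact ha (e ▸ hφ.1 hw)
  refine ⟨W ⊕ Bool, inferInstance, attachCherry T l, φ', isCubicTree_attachCherry hT hln,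
    ?_, ?_, ?_⟩
  · rintro (w | (_ | _)) hw
    · exact Finset.mem_insert_of_mem (hφ.1 (hinl hw).2)
    · exact Finset.mem_insert_of_mem hlV
    · exact Finset.mem_insert_self a V
  · rintro (w | c) hw (w' | c') hw' e
    · exact congrArg Sum.inl (hφ.2.1 (hinl hw).2 (hinl hw').2 e)
    · exact absurd e (hne hw c')
    · exact absurd e.symm (hne hw' c)
    · cases c <;> cases c' <;> simp_all [φ', ne_of_mem_of_not_mem hlV ha]
  · intro y hy
    rcases Finset.mem_insert.mp hy with rfl | hy
    · exact ⟨.inr true, isTreeLeaf_attachCherry_inr true, rfl⟩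
    obtain ⟨w, hw, rfl⟩ := hφ.2.2 hy
    by_cases hwl : w = l
    · exact ⟨.inr false, isTreeLeaf_attachCherry_inr false, by simp [φ', hwl]⟩
    · exact ⟨.inl w, (isTreeLeaf_attachCherry_inl_iff hln).mpr ⟨hwl, hw⟩, rfl⟩

theorem exists_isLeafLabelling (hV : V.Nonempty) :
    ∃ (W : Type) (_ : Finite W) (T : SimpleGraph W) (φ : W → ℕ), IsLeafLabelling T φ V := by
  induction hV using Finset.Nonempty.cons_induction with
  | singleton p => exact ⟨Unit, inferInstance, ⊥, fun _ => p, isLeafLabelling_singleton p⟩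
  | cons a s ha hs ih =>
    obtain ⟨W, _, T, φ, h⟩ := ih
    rw [Finset.cons_eq_insert]
    by_cases hs2 : 2 ≤ s.card
    · exact h.exists_insert hs2 ha
    · obtain ⟨p, rfl⟩ := Finset.card_eq_one.mp (show s.card = 1 by have := hs.card_pos; omega)
      exact ⟨Bool, inferInstance, ⊤, _, isLeafLabelling_pair (Finset.notMem_singleton.mp ha)⟩

end Grow
section CycleWidth

variable {D E : Dgraph}

lemma CycleDecomp.cycPorosity_le_width (c : CycleDecomp D) {s t : c.W} (h : c.T.Adj s t) :
    D.cycPorosity (treeShore c.T c.φ s t) ≤ c.width := by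
  let _ : Fintype c.W := c.fin
  refine le_of_eq_of_le ?_ (Finset.le_sup (f := fun p : c.W × c.W =>
    if c.T.Adj p.1 p.2 then D.cycPorosity (treeShore c.T c.φ p.1 p.2) else 0)
    (Finset.mem_univ (s, t)))
  simp [h]

lemma CycleDecomp.width_le (c : CycleDecomp D) {m : ℕ}
    (h : ∀ s t, c.T.Adj s t → D.cycPorosity (treeShore c.T c.φ s t) ≤ m) : c.width ≤ m := by
  let _ : Fintype c.W := c.fin
  refine Finset.sup_le fun p _ => ?_
  split_ifs with hp
  exacts [h p.1 p.2 hp, Nat.zero_le m]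

lemma cycleWidth_eq_zero_of_verts_eq_empty (h : D.verts = ∅) : cycleWidth D = 0 := by
  by_cases hc : Nonempty (CycleDecomp D)
  · obtain ⟨c⟩ := hc
    refine Nat.eq_zero_of_le_zero ((Nat.sInf_le (s := {k | ∃ c : CycleDecomp D, c.width = k})
      ⟨c, rfl⟩).trans (c.width_le fun s t _ => ?_))
    rw [Dgraph.cycPorosity_eq_zero_of_verts_eq_empty h]
  · simp [cycleWidth, not_nonempty_iff.mp hc]

theorem cycleWidth_le_of_bijOn (V : Finset ℕ) (hV : V ⊆ D.verts) (g : ℕ → ℕ)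
    (hg : Set.BijOn g ↑V ↑E.verts)
    (hpor : ∀ X ⊆ (D.verts : Set ℕ), E.cycPorosity (g '' (X ∩ ↑V)) ≤ D.cycPorosity X) :
    cycleWidth E ≤ cycleWidth D := by
  rcases E.verts.eq_empty_or_nonempty with hE | ⟨y, hy⟩
  · exact (cycleWidth_eq_zero_of_verts_eq_empty hE).trans_le (Nat.zero_le _)
  -- restrict an optimal decomposition of `D` to `V` and relabel its leaves by `g`
  obtain ⟨v, hv, -⟩ := hg.2.2 hy
  obtain ⟨W, _, T, φ, hT⟩ := exists_isLeafLabelling ⟨v, hV hv⟩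
  obtain ⟨c, hc⟩ : ∃ c : CycleDecomp D, c.width = cycleWidth D :=
    Nat.sInf_mem (s := {k | ∃ c : CycleDecomp D, c.width = k})
      ⟨_, ⟨W, Fintype.ofFinite W, T, hT.1, φ, hT.2⟩, rfl⟩
  let _ : Fintype c.W := c.fin
  have hc' : IsLeafLabelling c.T c.φ D.verts := ⟨c.cubic, c.bij⟩
  obtain ⟨W', _, T', φ', hT', htr⟩ := hc'.exists_restrict hV ⟨v, hv⟩
  let c' : CycleDecomp E := ⟨W', Fintype.ofFinite W', T', hT'.1, g ∘ φ', hg.comp hT'.2⟩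
  calc cycleWidth E ≤ c'.width :=
        Nat.sInf_le (s := {k | ∃ c : CycleDecomp E, c.width = k}) ⟨c', rfl⟩
    _ ≤ c.width := c'.width_le fun s t hst => by
        obtain ⟨s₀, t₀, hst₀, hshore⟩ := htr s t hst
        calc E.cycPorosity (treeShore T' (g ∘ φ') s t)
            = E.cycPorosity (g '' (treeShore c.T c.φ s₀ t₀ ∩ ↑V)) := by
              rw [← hshore, treeShore, treeShore, Set.image_comp]
          _ ≤ D.cycPorosity (treeShore c.T c.φ s₀ t₀) := hpor _ (hc'.treeShore_subset s₀ t₀)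
          _ ≤ c.width := c.cycPorosity_le_width hst₀
    _ = cycleWidth D := hc

theorem cycleWidth_le_of_isSubgraph (h : E.IsSubgraph D) : cycleWidth E ≤ cycleWidth D :=
  cycleWidth_le_of_bijOn E.verts h.1 id (Set.bijOn_id _) fun X _ => by
    rw [Set.image_id, Dgraph.cycPorosity_inter_verts]
    exact Dgraph.cycPorosity_le_of_arcs_subset h.2

theorem cycleWidth_butterflyContract_le {u v x : ℕ} (h : D.ButterflyContractible u v)
    (hx : x ∉ (D.verts.erase u).erase v) :
    cycleWidth (butterflyContract D u v x) ≤ cycleWidth D := by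
  obtain ⟨huv, hout | hin⟩ := h
  · have huv' : u ≠ v := D.no_loops _ huv
    refine cycleWidth_le_of_bijOn (D.verts.erase u) (Finset.erase_subset _ _) _
      (Dgraph.bijOn_contractMap (D.arcs_mem _ huv).2 huv' hx) fun X hX => ?_
    exact Dgraph.cycPorosity_butterflyContract_le_of_out huv hout hx
      (Dgraph.mem_image_contractMap_self_iff hX huv' hx)
      fun _ => Dgraph.mem_image_contractMap_iff_of_notMem hX
  · have hvu : v ≠ u := (D.no_loops _ huv).symm
    have hx' : x ∉ (D.verts.erase v).erase u := by rwa [Finset.erase_right_comm]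
    have hbij := Dgraph.bijOn_contractMap (D.arcs_mem _ huv).1 hvu hx'
    rw [Finset.erase_right_comm] at hbij
    refine cycleWidth_le_of_bijOn (D.verts.erase v) (Finset.erase_subset _ _) _ hbij
      fun X hX => ?_
    exact Dgraph.cycPorosity_butterflyContract_le_of_in huv hin hx
      (Dgraph.mem_image_contractMap_self_iff hX hvu hx')
      fun _ hw => Dgraph.mem_image_contractMap_iff_of_notMem hX (by rwa [Set.insert_comm])

end CycleWidth

/-- Cyclewidth is monotone under butterfly minors. -/
theorem cycleWidth_le_of_isButterflyMinor (D D' : Dgraph) (h : IsButterflyMinor D' D) :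
    cycleWidth D' ≤ cycleWidth D := by
  obtain ⟨S, hS, hsteps⟩ := h
  refine le_trans ?_ (cycleWidth_le_of_isSubgraph hS)
  induction hsteps with
  | refl => exact le_rfl
  | tail _ hstep ih =>
    obtain ⟨u, v, x, hc, hx, rfl⟩ := hstep
    exact (cycleWidth_butterflyContract_le hc hx).trans ih
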